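/- arXiv:2110.11208 — 4 statements merged into one kernel-verified Lean document; each statement's English description precedes it below -/
import Mathlib

section
/- There is a universal constant c > 0 such that for any α, β ≤ 1/4, any ε ∈ (0,1), and any δ ∈ (0, 0.1·ε^{1.1}), if there exists an (ε,δ)-differentially private (α,β)-accurate user-level learner for a concept class C on n users (each holding any number m of samples), then n ≥ c·min{log(1/δ), prdim(C)}/ε. -/
open scoped ENNReal

noncomputable section

def pmfPi {β : Type*} : {n : ℕ} → (Fin n → PMF β) → PMF (Fin n → β)
  | 0, _ => PMF.pure Fin.elim0
  | _ + 1, p => (p 0).bind fun b => (pmfPi fun i => p i.succ).bind fun f => PMF.pure (Fin.cons b f)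

def iidPMF {Z : Type*} (D : PMF Z) (m : ℕ) : PMF (Fin m → Z) := pmfPi fun _ => D

def pr {α : Type*} (p : PMF α) (s : Set α) : ℝ≥0∞ := p.toOuterMeasure s

def errD {X : Type*} (D : PMF (X × Bool)) (h : X → Bool) : ℝ≥0∞ := pr D {z | h z.1 ≠ z.2}

def Realizable {X : Type*} (C : Set (X → Bool)) (D : PMF (X × Bool)) : Prop :=
  ∃ f ∈ C, errD D f = 0

/-- neighboring multiset datasets: add or remove the data of one user -/
def MNeighbor {A : Type*} (D D' : Multiset A) : Prop :=
  (∃ a, D' = a ::ₘ D) ∨ (∃ a, D = a ::ₘ D')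

/-- (ε,δ)-DP for mechanisms on multiset datasets (add/remove one user's data). -/
def DPmulti {A O : Type*} (M : Multiset A → PMF O) (ε δ : ℝ) : Prop :=
  ∀ D D', MNeighbor D D' → ∀ S : Set O,
    pr (M D) S ≤ ENNReal.ofReal (Real.exp ε) * pr (M D') S + ENNReal.ofReal δ

def errX {X : Type*} (Dx : PMF X) (f h : X → Bool) : ℝ≥0∞ := pr Dx {x | f x ≠ h x}

/-- 𝓗 (α,β)-probabilistically represents C -/
def Represents {X : Type*} (α β : ℝ) (C : Set (X → Bool)) (𝓗 : PMF (Finset (X → Bool))) : Prop :=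
  ∀ f ∈ C, ∀ Dx : PMF X,
    pr 𝓗 {H | ∃ h ∈ H, errX Dx f h ≤ ENNReal.ofReal α} ≥ ENNReal.ofReal (1 - β)

/-- size(𝓗) = max_{H ∈ supp 𝓗} log₂ |H| -/
def pmfSize {X : Type*} (𝓗 : PMF (Finset (X → Bool))) : ℝ :=
  sSup ((fun H : Finset (X → Bool) => Real.logb 2 H.card) '' 𝓗.support)

/-- prdim_{α,β}(C) -/
def prdimAB {X : Type*} (α β : ℝ) (C : Set (X → Bool)) : ℝ :=
  sInf {s | ∃ 𝓗, Represents α β C 𝓗 ∧ s = pmfSize 𝓗}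

/-- prdim(C) := prdim_{1/4,1/4}(C) -/
def prdim {X : Type*} (C : Set (X → Bool)) : ℝ := prdimAB (1/4) (1/4) C

namespace Aux3

lemma pr_mono {α : Type*} (p : PMF α) {s t : Set α} (h : s ⊆ t) : pr p s ≤ pr p t :=
  p.toOuterMeasure.mono h

lemma pr_le_one {α : Type*} (p : PMF α) (s : Set α) : pr p s ≤ 1 := by
  rw [pr, PMF.toOuterMeasure_apply]
  calc ∑' x, s.indicator p x ≤ ∑' x, p x :=
        ENNReal.tsum_le_tsum (fun x => Set.indicator_le_self _ _ _)
    _ = 1 := p.tsum_coe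

lemma pr_ne_top {α : Type*} (p : PMF α) (s : Set α) : pr p s ≠ ⊤ :=
  (lt_of_le_of_lt (pr_le_one p s) (by norm_num)).ne

lemma pr_add_compl {α : Type*} (p : PMF α) (s : Set α) : pr p s + pr p sᶜ = 1 := by
  rw [pr, pr, PMF.toOuterMeasure_apply, PMF.toOuterMeasure_apply, ← ENNReal.tsum_add]
  rw [← p.tsum_coe]
  congr 1
  ext x
  rw [Set.indicator_self_add_compl_apply]

lemma pr_compl {α : Type*} (p : PMF α) (s : Set α) : pr p sᶜ = 1 - pr p s :=
  ENNReal.eq_sub_of_add_eq (pr_ne_top p s) (by rw [add_comm]; exact pr_add_compl p s)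

lemma pr_eq_one_sub_compl {α : Type*} (p : PMF α) (s : Set α) : pr p s = 1 - pr p sᶜ :=
  ENNReal.eq_sub_of_add_eq (pr_ne_top p sᶜ) (pr_add_compl p s)

lemma pr_bind {α β : Type*} (p : PMF α) (f : α → PMF β) (s : Set β) :
    pr (p.bind f) s = ∑' a, p a * pr (f a) s :=
  PMF.toOuterMeasure_bind_apply p f s

lemma pr_bind_le {α β : Type*} (p : PMF α) (f : α → PMF β) (s : Set β) (B : ℝ≥0∞)
    (h : ∀ a, pr (f a) s ≤ B) : pr (p.bind f) s ≤ B := by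
  rw [pr_bind]
  calc ∑' a, p a * pr (f a) s ≤ ∑' a, p a * B :=
        ENNReal.tsum_le_tsum (fun a => mul_le_mul_right (h a) _)
    _ = (∑' a, p a) * B := by rw [ENNReal.tsum_mul_right]
    _ = B := by rw [p.tsum_coe, one_mul]

lemma pr_map {α β : Type*} (p : PMF α) (f : α → β) (s : Set β) :
    pr (p.map f) s = pr p (f ⁻¹' s) :=
  PMF.toOuterMeasure_map_apply f p s

open scoped Classical in
lemma pr_pure {α : Type*} (a : α) (s : Set α) :
    pr (PMF.pure a) s = if a ∈ s then 1 else 0 :=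
  PMF.toOuterMeasure_pure_apply a s

open scoped Classical in
lemma pr_tsum {α : Type*} (p : PMF α) (s : Set α) :
    pr p s = ∑' a, if a ∈ s then p a else 0 := by
  rw [pr, PMF.toOuterMeasure_apply]
  exact tsum_congr fun a => by by_cases h : a ∈ s <;> simp [Set.indicator, h]

lemma pr_empty {α : Type*} (p : PMF α) : pr p (∅ : Set α) = 0 := by
  rw [pr_tsum]; simp

/-- product lemma for pmfPi -/
lemma pr_pmfPi_forall {β : Type*} : ∀ {n : ℕ} (p : Fin n → PMF β) (A : Fin n → Set β),
    pr (pmfPi p) {g | ∀ i, g i ∈ A i} = ∏ i, pr (p i) (A i)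
  | 0, p, A => by
    rw [show pmfPi p = PMF.pure Fin.elim0 from rfl, pr_pure]
    rw [Finset.univ_eq_empty, Finset.prod_empty, if_pos]
    intro i; exact i.elim0
  | n + 1, p, A => by
    classical
    rw [show pmfPi p = (p 0).bind fun b => (pmfPi fun i => p i.succ).bind
        fun f => PMF.pure (Fin.cons b f) from rfl]
    rw [pr_bind]
    have key : ∀ b : β, pr ((pmfPi fun i => p i.succ).bind fun f => PMF.pure (Fin.cons b f))
        {g | ∀ i, g i ∈ A i}
        = (if b ∈ A 0 then 1 else 0) * pr (pmfPi fun i => p i.succ) {g | ∀ i, g i ∈ A i.succ} := by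
      intro b
      rw [pr_bind]
      by_cases hb : b ∈ A 0
      · simp only [hb, if_true, one_mul]
        rw [pr_tsum]
        refine tsum_congr fun g => ?_
        rw [pr_pure]
        have : (Fin.cons b g ∈ {g : Fin (n+1) → β | ∀ i, g i ∈ A i}) ↔ (∀ i, g i ∈ A i.succ) := by
          constructor
          · intro h i; have := h i.succ; rwa [Fin.cons_succ] at this
          · intro h i
            refine Fin.cases ?_ ?_ i
            · rwa [Fin.cons_zero]
            · intro j; rw [Fin.cons_succ]; exact h j
        by_cases hg : ∀ i, g i ∈ A i.succ
        · simp [Set.mem_setOf_eq, this, hg]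
        · simp [Set.mem_setOf_eq, this, hg]
      · simp only [hb, if_false, zero_mul]
        refine ENNReal.tsum_eq_zero.2 fun g => ?_
        rw [pr_pure]
        have : Fin.cons b g ∉ {g : Fin (n+1) → β | ∀ i, g i ∈ A i} := by
          intro h; exact hb (by simpa using h 0)
        simp [this]
    calc ∑' b, (p 0) b * pr ((pmfPi fun i => p i.succ).bind fun f => PMF.pure (Fin.cons b f))
          {g | ∀ i, g i ∈ A i}
        = ∑' b, ((if b ∈ A 0 then (p 0) b else 0) *
            pr (pmfPi fun i => p i.succ) {g | ∀ i, g i ∈ A i.succ}) := by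
          refine tsum_congr fun b => ?_
          rw [key b]
          by_cases hb : b ∈ A 0 <;> simp [hb, mul_comm, mul_assoc, mul_left_comm]
      _ = (∑' b, (if b ∈ A 0 then (p 0) b else 0)) *
            pr (pmfPi fun i => p i.succ) {g | ∀ i, g i ∈ A i.succ} := ENNReal.tsum_mul_right
      _ = pr (p 0) (A 0) * ∏ i : Fin n, pr (p i.succ) (A i.succ) := by
          rw [← pr_tsum, pr_pmfPi_forall (fun i => p i.succ) (fun i => A i.succ)]
      _ = ∏ i : Fin (n+1), pr (p i) (A i) := by rw [Fin.prod_univ_succ]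

/-- group privacy -/
lemma group_privacy {A O : Type*} (M : Multiset A → PMF O) {ε δ : ℝ} (hε : 0 ≤ ε)
    (hDP : DPmulti M ε δ) (S : Set O) (s : Multiset A) :
    pr (M s) S ≤ ENNReal.ofReal (Real.exp ε) ^ (Multiset.card s) * pr (M 0) S +
      (Multiset.card s) * ENNReal.ofReal (Real.exp ε) ^ (Multiset.card s) * ENNReal.ofReal δ := by
  induction s using Multiset.induction_on with
  | empty => simp
  | cons a s ih =>
    have hE1 : (1 : ℝ≥0∞) ≤ ENNReal.ofReal (Real.exp ε) := by
      rw [show (1:ℝ≥0∞) = ENNReal.ofReal 1 by simp]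
      exact ENNReal.ofReal_le_ofReal (Real.one_le_exp hε)
    have hstep := hDP (a ::ₘ s) s (Or.inr ⟨a, rfl⟩) S
    set E := ENNReal.ofReal (Real.exp ε) with hE
    set k := Multiset.card s with hk
    calc pr (M (a ::ₘ s)) S ≤ E * pr (M s) S + ENNReal.ofReal δ := hstep
      _ ≤ E * (E ^ k * pr (M 0) S + k * E ^ k * ENNReal.ofReal δ) + ENNReal.ofReal δ := by
          gcongr
      _ = E ^ (k + 1) * pr (M 0) S + (k * E ^ (k+1) * ENNReal.ofReal δ + ENNReal.ofReal δ) := by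
          ring
      _ ≤ E ^ (k + 1) * pr (M 0) S + (k * E ^ (k+1) * ENNReal.ofReal δ
            + E ^ (k+1) * ENNReal.ofReal δ) := by
          gcongr
          calc ENNReal.ofReal δ = 1 * ENNReal.ofReal δ := (one_mul _).symm
            _ ≤ E ^ (k+1) * ENNReal.ofReal δ := by
                gcongr
                exact one_le_pow_of_one_le' hE1 _
      _ = E ^ (k + 1) * pr (M 0) S + (k + 1) * E ^ (k+1) * ENNReal.ofReal δ := by ring
      _ = E ^ (Multiset.card (a ::ₘ s)) * pr (M 0) S +
            (Multiset.card (a ::ₘ s)) * E ^ (Multiset.card (a ::ₘ s)) * ENNReal.ofReal δ := by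
          rw [Multiset.card_cons]
          push_cast
          ring

lemma xexp_le {a x : ℝ} (ha : 0 < a) : x * Real.exp (-(a*x)) ≤ 1/a := by
  have h2 : x ≤ Real.exp (a*x) / a := by
    rw [le_div_iff₀ ha]
    nlinarith [Real.add_one_le_exp (a*x)]
  calc x * Real.exp (-(a*x)) ≤ (Real.exp (a*x)/a) * Real.exp (-(a*x)) :=
        mul_le_mul_of_nonneg_right h2 (Real.exp_nonneg _)
    _ = 1/a := by
        rw [div_mul_eq_mul_div, ← Real.exp_add, add_neg_cancel, Real.exp_zero]

lemma numeric_w {ε δ : ℝ} (n : ℕ) (hε0 : 0 < ε) (hε1 : ε < 1) (hδ0 : 0 < δ)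
    (hδε : δ < 0.1 * ε ^ (1.1:ℝ)) (hsub : (n:ℝ) * ε ≤ Real.log (1/δ) / 200) :
    (n:ℝ) * Real.exp ((n:ℝ)*ε) * δ ≤ 1/10 := by
  set x := Real.log (1/δ) with hxdef
  have hrp1 : ε ^ (1.1:ℝ) < 1 := Real.rpow_lt_one hε0.le hε1 (by norm_num)
  have hδ1 : δ < 1 := by nlinarith
  have hx0 : 0 < x := Real.log_pos (by rw [lt_div_iff₀ hδ0]; linarith)
  have hlogδ : Real.log δ = -x := by rw [hxdef, one_div, Real.log_inv]; ring
  have hδx : δ = Real.exp (-x) := by rw [← hlogδ, Real.exp_log hδ0]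
  have hεlb : Real.exp (-(10/11 * x)) < ε := by
    have h10 : 10 * δ < ε ^ (1.1:ℝ) := by nlinarith
    have h1 : (10*δ) ^ ((10:ℝ)/11) < (ε ^ (1.1:ℝ)) ^ ((10:ℝ)/11) :=
      Real.rpow_lt_rpow (by positivity) h10 (by norm_num)
    have h2 : (ε ^ (1.1:ℝ)) ^ ((10:ℝ)/11) = ε := by
      rw [← Real.rpow_mul hε0.le]
      norm_num
    have h3 : δ ^ ((10:ℝ)/11) ≤ (10*δ) ^ ((10:ℝ)/11) :=
      Real.rpow_le_rpow hδ0.le (by linarith) (by norm_num)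
    have h4 : δ ^ ((10:ℝ)/11) = Real.exp (-(10/11 * x)) := by
      rw [Real.rpow_def_of_pos hδ0, hlogδ]
      ring_nf
    rw [← h4]
    calc δ ^ ((10:ℝ)/11) ≤ (10*δ) ^ ((10:ℝ)/11) := h3
      _ < ε := by rw [← h2]; exact h1
  have hinv : 1/ε ≤ Real.exp (10/11 * x) := by
    rw [div_le_iff₀ hε0]
    have hone : Real.exp (10/11*x) * Real.exp (-(10/11*x)) = 1 := by
      rw [← Real.exp_add]; simp
    nlinarith [Real.exp_pos (10/11 * x)]
  have hn : (n:ℝ) ≤ x / (200 * ε) := by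
    rw [le_div_iff₀ (by positivity)]
    nlinarith [hsub]
  have key : (n:ℝ) * Real.exp ((n:ℝ)*ε) * δ ≤ (x/(200*ε)) * Real.exp (x/200) * Real.exp (-x) := by
    rw [hδx]
    gcongr
  have hsplit : x/(200*ε) ≤ x/200 * Real.exp (10/11*x) := by
    calc x/(200*ε) = (x/200) * (1/ε) := by ring
      _ ≤ (x/200) * Real.exp (10/11*x) := by gcongr
  calc (n:ℝ) * Real.exp ((n:ℝ)*ε) * δ
      ≤ (x/(200*ε)) * Real.exp (x/200) * Real.exp (-x) := key
    _ ≤ (x/200 * Real.exp (10/11*x)) * Real.exp (x/200) * Real.exp (-x) := by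
        gcongr
    _ = (x/200) * Real.exp (10/11*x + (x/200 + -x)) := by
        rw [Real.exp_add, Real.exp_add]; ring
    _ = (x/200) * Real.exp (-(189/2200 * x)) := by ring_nf
    _ ≤ (1/200) * (2200/189) := by
        have := xexp_le (a := 189/2200) (x := x) (by norm_num)
        nlinarith
    _ ≤ 1/10 := by norm_num

lemma logb_card_nonneg {γ : Type*} (H : Finset γ) : 0 ≤ Real.logb 2 H.card := by
  rcases Nat.eq_zero_or_pos H.card with h | h
  · simp [h]
  · exact Real.logb_nonneg (by norm_num) (by exact_mod_cast h)

lemma pmfSize_nonneg {X : Type*} (𝓗 : PMF (Finset (X → Bool))) : 0 ≤ pmfSize 𝓗 := by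
  apply Real.sSup_nonneg
  rintro s ⟨H, _, rfl⟩
  exact logb_card_nonneg H

lemma prdim_le_pmfSize {X : Type*} (C : Set (X → Bool)) (𝓗 : PMF (Finset (X → Bool)))
    (hrep : Represents (1/4) (1/4) C 𝓗) : prdim C ≤ pmfSize 𝓗 := by
  apply csInf_le
  · exact ⟨0, by rintro s ⟨G, _, rfl⟩; exact pmfSize_nonneg G⟩
  · exact ⟨𝓗, hrep, rfl⟩

lemma pmfSize_le_logb {X : Type*} (𝓗 : PMF (Finset (X → Bool))) (T : ℕ) (hT : 1 ≤ T)
    (h : ∀ H ∈ 𝓗.support, H.card ≤ T) : pmfSize 𝓗 ≤ Real.logb 2 T := by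
  apply Real.sSup_le
  · rintro s ⟨H, hH, rfl⟩
    rcases Nat.eq_zero_or_pos H.card with h0 | h0
    · simp only [h0]
      simpa using Real.logb_nonneg (by norm_num) (by exact_mod_cast hT : (1:ℝ) ≤ (T:ℝ))
    · exact Real.logb_le_logb_of_le (by norm_num) (by exact_mod_cast h0) (by exact_mod_cast h H hH)
  · exact Real.logb_nonneg (by norm_num) (by exact_mod_cast hT)

end Aux3


set_option maxHeartbeats 4000000 in
open Aux3 in
/-- lower bound on the number of users for user-level (ε,δ)-DP learning. -/
theorem stmt3 :
    ∃ c : ℝ, 0 < c ∧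
      ∀ (X : Type) [Fintype X] (C : Set (X → Bool)) (α β ε δ : ℝ) (n m : ℕ)
        (M : Multiset (Fin m → X × Bool) → PMF (X → Bool)),
        0 < α → α ≤ 1/4 → 0 < β → β ≤ 1/4 → ε ∈ Set.Ioo (0 : ℝ) 1 →
        0 < δ → δ < 0.1 * ε ^ (1.1 : ℝ) →
        DPmulti M ε δ →
        (∀ D : PMF (X × Bool), Realizable C D →
          pr ((iidPMF (iidPMF D m) n).bind fun u => M (List.ofFn u))
            {h | errD D h ≤ ENNReal.ofReal α} ≥ ENNReal.ofReal (1 - β)) →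
        (n : ℝ) ≥ c * min (Real.log (1 / δ)) (prdim C) / ε := by
  classical
  refine ⟨1/200, by norm_num, ?_⟩
  intro X _ C α β ε δ n m M hα0 hα14 hβ0 hβ14 hε hδ0 hδε hDP hAcc
  obtain ⟨hε0, hε1⟩ := hε
  have hδ1 : δ < 1 := by
    have : ε ^ (1.1:ℝ) < 1 := Real.rpow_lt_one hε0.le hε1 (by norm_num)
    nlinarith
  have hL0 : 0 < Real.log (1/δ) := Real.log_pos (by rw [lt_div_iff₀ hδ0]; linarith)
  by_cases hCtriv : ∀ f ∈ C, ∀ g ∈ C, f = g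
  · -- C has at most one concept: prdim C ≤ 0
    have hP : prdim C ≤ 0 := by
      by_cases hCne : C.Nonempty
      · obtain ⟨f₀, hf₀⟩ := hCne
        have hrep : Represents (1/4) (1/4) C (PMF.pure {f₀}) := by
          intro f hf Dx
          have hff : f = f₀ := hCtriv f hf f₀ hf₀
          have hmem : ({f₀} : Finset (X → Bool)) ∈
              {H : Finset (X → Bool) | ∃ h ∈ H, errX Dx f h ≤ ENNReal.ofReal (1/4)} := by
            refine ⟨f₀, Finset.mem_singleton_self _, ?_⟩
            have hz : errX Dx f f₀ = 0 := by
              rw [hff, errX]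
              have he : {x | f₀ x ≠ f₀ x} = (∅ : Set X) := by ext x; simp
              rw [he, pr_empty]
            simp [hz]
          rw [ge_iff_le, pr_pure, if_pos hmem]
          exact ENNReal.ofReal_le_one.2 (by norm_num)
        have h1 := prdim_le_pmfSize C (PMF.pure {f₀}) hrep
        have hsz : pmfSize (PMF.pure ({f₀} : Finset (X → Bool))) ≤ 0 := by
          apply Real.sSup_nonpos
          rintro s ⟨H, hH, rfl⟩
          have hHe : H = {f₀} := by simpa [PMF.support_pure] using hH
          simp [hHe]
        linarith
      · have hrep : Represents (1/4) (1/4) C (PMF.pure (∅ : Finset (X → Bool))) := by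
          intro f hf Dx
          exact absurd ⟨f, hf⟩ hCne
        have h1 := prdim_le_pmfSize C _ hrep
        have hsz : pmfSize (PMF.pure (∅ : Finset (X → Bool))) ≤ 0 := by
          apply Real.sSup_nonpos
          rintro s ⟨H, hH, rfl⟩
          have hHe : H = ∅ := by simpa [PMF.support_pure] using hH
          simp [hHe]
        linarith
    have hmin : min (Real.log (1/δ)) (prdim C) ≤ 0 := le_trans (min_le_right _ _) hP
    rw [ge_iff_le]
    calc (1:ℝ)/200 * min (Real.log (1/δ)) (prdim C) / ε ≤ 0 := by
          apply div_nonpos_of_nonpos_of_nonneg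
          · nlinarith
          · exact hε0.le
      _ ≤ n := Nat.cast_nonneg n
  · -- C has two distinct concepts
    push_neg at hCtriv
    obtain ⟨f, hf, g, hg, hfg⟩ := hCtriv
    obtain ⟨x₀, hx₀⟩ := Function.ne_iff.1 hfg
    have hαlt : ENNReal.ofReal α < 1 := ENNReal.ofReal_lt_one.2 (by linarith)
    -- general bound from accuracy plus group privacy
    have hQbound : ∀ S : Set (X → Bool), ∀ D : PMF (X × Bool), Realizable C D →
        {h : X → Bool | errD D h ≤ ENNReal.ofReal α} ⊆ S →
        (3/4 : ℝ) ≤ Real.exp ((n:ℝ)*ε) * (pr (M 0) S).toReal +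
          (n:ℝ) * Real.exp ((n:ℝ)*ε) * δ := by
      intro S D hD hsubS
      have h1 : ENNReal.ofReal (1 - β) ≤
          pr ((iidPMF (iidPMF D m) n).bind fun u => M (List.ofFn u)) S :=
        le_trans (hAcc D hD) (pr_mono _ hsubS)
      have h2 : pr ((iidPMF (iidPMF D m) n).bind fun u => M (List.ofFn u)) S ≤
          ENNReal.ofReal (Real.exp ε) ^ n * pr (M 0) S +
            (n : ℝ≥0∞) * ENNReal.ofReal (Real.exp ε) ^ n * ENNReal.ofReal δ := by
        apply pr_bind_le
        intro u
        have hgp := group_privacy M hε0.le hDP S (List.ofFn u)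
        simpa using hgp
      have hEn : ENNReal.ofReal (Real.exp ε) ^ n = ENNReal.ofReal (Real.exp ((n:ℝ)*ε)) := by
        rw [← ENNReal.ofReal_pow (Real.exp_nonneg ε), ← Real.exp_nat_mul]
      have hW : (n:ℝ≥0∞) * ENNReal.ofReal (Real.exp ((n:ℝ)*ε)) * ENNReal.ofReal δ
          = ENNReal.ofReal ((n:ℝ) * Real.exp ((n:ℝ)*ε) * δ) := by
        rw [ENNReal.ofReal_mul (by positivity), ENNReal.ofReal_mul (by positivity),
          ENNReal.ofReal_natCast]
      rw [hEn, hW] at h2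
      have h3 : ENNReal.ofReal (3/4 : ℝ) ≤ ENNReal.ofReal (Real.exp ((n:ℝ)*ε)) * pr (M 0) S +
          ENNReal.ofReal ((n:ℝ) * Real.exp ((n:ℝ)*ε) * δ) :=
        le_trans (ENNReal.ofReal_le_ofReal (by linarith)) (le_trans h1 h2)
      have hfin1 : ENNReal.ofReal (Real.exp ((n:ℝ)*ε)) * pr (M 0) S ≠ ⊤ :=
        ENNReal.mul_ne_top ENNReal.ofReal_ne_top (pr_ne_top _ _)
      have hfin : ENNReal.ofReal (Real.exp ((n:ℝ)*ε)) * pr (M 0) S +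
          ENNReal.ofReal ((n:ℝ) * Real.exp ((n:ℝ)*ε) * δ) ≠ ⊤ :=
        ENNReal.add_ne_top.2 ⟨hfin1, ENNReal.ofReal_ne_top⟩
      have h4 := ENNReal.toReal_mono hfin h3
      rw [ENNReal.toReal_ofReal (by norm_num), ENNReal.toReal_add hfin1 ENNReal.ofReal_ne_top,
        ENNReal.toReal_mul, ENNReal.toReal_ofReal (Real.exp_nonneg _),
        ENNReal.toReal_ofReal (by positivity)] at h4
      exact h4
    by_cases hsub : (n:ℝ) * ε ≤ Real.log (1/δ) / 200
    · -- main case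
      have hw : (n:ℝ) * Real.exp ((n:ℝ)*ε) * δ ≤ 1/10 := numeric_w n hε0 hε1 hδ0 hδε hsub
      have ht0 : (0:ℝ) ≤ (n:ℝ)*ε := by positivity
      have het1 : (1:ℝ) ≤ Real.exp ((n:ℝ)*ε) := Real.one_le_exp ht0
      have hexptpos := Real.exp_pos ((n:ℝ)*ε)
      -- Step A : exp(nε) ≥ 13/10, hence nε ≥ 3/13
      have hAfb : (3/4:ℝ) ≤ Real.exp ((n:ℝ)*ε) *
          (pr (M 0) {h : X → Bool | h x₀ = f x₀}).toReal + (n:ℝ) * Real.exp ((n:ℝ)*ε) * δ := by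
        apply hQbound _ (PMF.pure (x₀, f x₀))
        · refine ⟨f, hf, ?_⟩
          rw [errD, pr_pure, if_neg]
          simp
        · intro h hh
          simp only [Set.mem_setOf_eq] at hh ⊢
          by_contra hne
          rw [errD, pr_pure, if_pos (by simpa using hne)] at hh
          exact absurd (lt_of_le_of_lt hh hαlt) (lt_irrefl _)
      have hAgb : (3/4:ℝ) ≤ Real.exp ((n:ℝ)*ε) *
          (pr (M 0) {h : X → Bool | h x₀ = f x₀}ᶜ).toReal + (n:ℝ) * Real.exp ((n:ℝ)*ε) * δ := by
        apply hQbound _ (PMF.pure (x₀, g x₀))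
        · refine ⟨g, hg, ?_⟩
          rw [errD, pr_pure, if_neg]
          simp
        · intro h hh
          simp only [Set.mem_setOf_eq] at hh
          simp only [Set.mem_compl_iff, Set.mem_setOf_eq]
          by_cases heq : h x₀ = g x₀
          · rw [heq]; exact fun hc => hx₀ hc.symm
          · rw [errD, pr_pure, if_pos (by simpa using heq)] at hh
            exact absurd (lt_of_le_of_lt hh hαlt) (lt_irrefl _)
      have hsum : (pr (M 0) {h : X → Bool | h x₀ = f x₀}).toReal +
          (pr (M 0) {h : X → Bool | h x₀ = f x₀}ᶜ).toReal = 1 := by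
        have hadd := pr_add_compl (M 0) {h : X → Bool | h x₀ = f x₀}
        have := congrArg ENNReal.toReal hadd
        rwa [ENNReal.toReal_add (pr_ne_top _ _) (pr_ne_top _ _), ENNReal.toReal_one] at this
      have he13 : (13/10 : ℝ) ≤ Real.exp ((n:ℝ)*ε) := by nlinarith
      have ht313 : (3:ℝ)/13 ≤ (n:ℝ)*ε := by
        have h1 := Real.add_one_le_exp (-((n:ℝ)*ε))
        have h2 : Real.exp (-((n:ℝ)*ε)) = (Real.exp ((n:ℝ)*ε))⁻¹ := Real.exp_neg _
        have h3 : (Real.exp ((n:ℝ)*ε))⁻¹ ≤ 10/13 := by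
          rw [inv_le_comm₀ hexptpos (by norm_num)]
          linarith
        linarith [h2 ▸ h1, h3]
      -- Step B : representation
      set q₀ : ℝ := (13/20) * (Real.exp ((n:ℝ)*ε))⁻¹ with hq₀def
      have hq₀pos : 0 < q₀ := by positivity
      have hq₀le : q₀ ≤ 13/20 := by
        rw [hq₀def]
        have : (Real.exp ((n:ℝ)*ε))⁻¹ ≤ 1 := by
          rw [inv_le_one_iff₀]; right; exact het1
        nlinarith
      set T := ⌈(4:ℝ) * Real.exp ((n:ℝ)*ε)⌉₊ with hTdef
      have hT4 : (4:ℝ) * Real.exp ((n:ℝ)*ε) ≤ T := Nat.le_ceil _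
      have hT1 : 1 ≤ T := Nat.ceil_pos.2 (by positivity)
      have hTle : (T:ℝ) ≤ 5 * Real.exp ((n:ℝ)*ε) := by
        have := Nat.ceil_lt_add_one (by positivity : (0:ℝ) ≤ 4 * Real.exp ((n:ℝ)*ε))
        nlinarith
      -- per-concept bound on the output distribution of M on the empty dataset
      have hQS : ∀ f' ∈ C, ∀ Dx : PMF X,
          ENNReal.ofReal q₀ ≤ pr (M 0) {h : X → Bool | errX Dx f' h ≤ ENNReal.ofReal (1/4)} := by
        intro f' hf' Dx
        have hbound := hQbound {h : X → Bool | errX Dx f' h ≤ ENNReal.ofReal (1/4)}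
          (Dx.map fun x => (x, f' x)) ?_ ?_
        · have hge : q₀ ≤ (pr (M 0) {h : X → Bool | errX Dx f' h ≤ ENNReal.ofReal (1/4)}).toReal := by
            have h4 : (13/20:ℝ) ≤ Real.exp ((n:ℝ)*ε) *
                (pr (M 0) {h : X → Bool | errX Dx f' h ≤ ENNReal.ofReal (1/4)}).toReal := by
              linarith
            rw [hq₀def]
            rw [mul_inv_le_iff₀ hexptpos]
            linarith [h4, mul_comm (Real.exp ((n:ℝ)*ε))
              (pr (M 0) {h : X → Bool | errX Dx f' h ≤ ENNReal.ofReal (1/4)}).toReal]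
          calc ENNReal.ofReal q₀
              ≤ ENNReal.ofReal ((pr (M 0) {h : X → Bool | errX Dx f' h ≤ ENNReal.ofReal (1/4)}).toReal) :=
                ENNReal.ofReal_le_ofReal hge
            _ = pr (M 0) {h : X → Bool | errX Dx f' h ≤ ENNReal.ofReal (1/4)} :=
                ENNReal.ofReal_toReal (pr_ne_top _ _)
        · refine ⟨f', hf', ?_⟩
          rw [errD, pr_map]
          have he : ((fun x => (x, f' x)) ⁻¹' {z : X × Bool | f' z.1 ≠ z.2}) = (∅ : Set X) := by
            ext x; simp
          rw [he, pr_empty]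
        · intro h hh
          simp only [Set.mem_setOf_eq] at hh ⊢
          rw [errD, pr_map] at hh
          have he : ((fun x => (x, f' x)) ⁻¹' {z : X × Bool | h z.1 ≠ z.2})
              = {x | f' x ≠ h x} := by
            ext x; simp [ne_comm]
          rw [he] at hh
          exact le_trans hh (ENNReal.ofReal_le_ofReal (by linarith))
      -- the representing distribution
      set 𝓗 : PMF (Finset (X → Bool)) :=
        (iidPMF (M 0) T).map (fun g : Fin T → (X → Bool) => Finset.image g Finset.univ) with h𝓗def
      have hpow14 : ((1:ℝ) - q₀)^T ≤ 1/4 := by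
        have hb1 : (1:ℝ) - q₀ ≤ Real.exp (-q₀) := by
          have := Real.add_one_le_exp (-q₀)
          linarith
        have hb2 : ((1:ℝ) - q₀)^T ≤ Real.exp (-q₀)^T := by
          exact pow_le_pow_left₀ (by linarith) hb1 T
        have hb3 : Real.exp (-q₀)^T = Real.exp ((T:ℝ) * (-q₀)) := (Real.exp_nat_mul _ T).symm
        have hb4 : (13:ℝ)/5 ≤ (T:ℝ) * q₀ := by
          have h1 : (4 * Real.exp ((n:ℝ)*ε)) * q₀ ≤ (T:ℝ) * q₀ :=
            mul_le_mul_of_nonneg_right hT4 hq₀pos.le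
          have he0 : Real.exp ((n:ℝ)*ε) ≠ 0 := (Real.exp_pos _).ne'
          have hcalc : (4 * Real.exp ((n:ℝ)*ε)) * q₀ = 13/5 := by
            rw [hq₀def]
            calc (4 * Real.exp ((n:ℝ)*ε)) * ((13/20) * (Real.exp ((n:ℝ)*ε))⁻¹)
                = (13/5) * (Real.exp ((n:ℝ)*ε) * (Real.exp ((n:ℝ)*ε))⁻¹) := by ring
              _ = 13/5 := by rw [mul_inv_cancel₀ he0, mul_one]
          linarith
        have hb5 : Real.exp ((T:ℝ) * (-q₀)) ≤ Real.exp (-(13/5)) := by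
          apply Real.exp_le_exp.2
          have hneg : (T:ℝ) * (-q₀) = -((T:ℝ) * q₀) := by ring
          rw [hneg]
          linarith
        have hb6 : Real.exp (-(13/5 : ℝ)) ≤ 1/4 := by
          rw [Real.exp_neg]
          rw [inv_le_comm₀ (Real.exp_pos _) (by norm_num)]
          have h26 : Real.exp (13/5 : ℝ) = Real.exp (13/10) * Real.exp (13/10) := by
            rw [← Real.exp_add]; norm_num
          nlinarith [Real.add_one_le_exp (13/10 : ℝ)]
        calc ((1:ℝ) - q₀)^T ≤ Real.exp ((T:ℝ) * (-q₀)) := hb3 ▸ hb2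
          _ ≤ Real.exp (-(13/5)) := hb5
          _ ≤ 1/4 := hb6
      have hrep : Represents (1/4) (1/4) C 𝓗 := by
        intro f' hf' Dx
        set S' := {h : X → Bool | errX Dx f' h ≤ ENNReal.ofReal (1/4)} with hS'def
        rw [ge_iff_le]
        have hQS' := hQS f' hf' Dx
        have hcompl : pr (M 0) S'ᶜ ≤ ENNReal.ofReal (1 - q₀) := by
          rw [pr_compl]
          calc 1 - pr (M 0) S' ≤ 1 - ENNReal.ofReal q₀ := tsub_le_tsub_left hQS' 1
            _ = ENNReal.ofReal (1 - q₀) := by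
                rw [ENNReal.ofReal_sub _ hq₀pos.le, ENNReal.ofReal_one]
        have hpowle : (pr (M 0) S'ᶜ)^T ≤ ENNReal.ofReal (((1:ℝ) - q₀)^T) := by
          rw [ENNReal.ofReal_pow (by linarith)]
          exact pow_le_pow_left' hcompl T
        have hprodeq : pr (iidPMF (M 0) T) {g : Fin T → (X → Bool) | ∀ i, g i ∈ S'ᶜ}
            = (pr (M 0) S'ᶜ)^T := by
          rw [iidPMF, pr_pmfPi_forall (fun _ => M 0) (fun _ => S'ᶜ)]
          rw [Finset.prod_const, Finset.card_univ, Fintype.card_fin]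
        have hsetc : {g : Fin T → (X → Bool) | ∃ i, g i ∈ S'} =
            {g : Fin T → (X → Bool) | ∀ i, g i ∈ S'ᶜ}ᶜ := by
          ext gg; simp
        have hexist : pr (iidPMF (M 0) T) {g : Fin T → (X → Bool) | ∃ i, g i ∈ S'}
            = 1 - (pr (M 0) S'ᶜ)^T := by
          rw [hsetc, pr_compl, hprodeq]
        have hsubset : {g : Fin T → (X → Bool) | ∃ i, g i ∈ S'} ⊆
            (fun g : Fin T → (X → Bool) => Finset.image g Finset.univ) ⁻¹'
              {H : Finset (X → Bool) | ∃ h ∈ H, errX Dx f' h ≤ ENNReal.ofReal (1/4)} := by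
          rintro gg ⟨i, hi⟩
          exact ⟨gg i, Finset.mem_image_of_mem gg (Finset.mem_univ i), hi⟩
        calc ENNReal.ofReal (1 - 1/4)
            ≤ 1 - ENNReal.ofReal (1/4 : ℝ) := by
              rw [← ENNReal.ofReal_one, ← ENNReal.ofReal_sub _ (by norm_num : (0:ℝ) ≤ 1/4)]
          _ ≤ 1 - ENNReal.ofReal (((1:ℝ) - q₀)^T) := by
              apply tsub_le_tsub_left
              exact ENNReal.ofReal_le_ofReal hpow14
          _ ≤ 1 - (pr (M 0) S'ᶜ)^T := by
              apply tsub_le_tsub_left hpowle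
          _ = pr (iidPMF (M 0) T) {g : Fin T → (X → Bool) | ∃ i, g i ∈ S'} := hexist.symm
          _ ≤ pr (iidPMF (M 0) T) ((fun g : Fin T → (X → Bool) => Finset.image g Finset.univ) ⁻¹'
              {H : Finset (X → Bool) | ∃ h ∈ H, errX Dx f' h ≤ ENNReal.ofReal (1/4)}) :=
              pr_mono _ hsubset
          _ = pr 𝓗 {H : Finset (X → Bool) | ∃ h ∈ H, errX Dx f' h ≤ ENNReal.ofReal (1/4)} :=
              (pr_map _ _ _).symm
      have hsize : prdim C ≤ Real.logb 2 T := by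
        refine (prdim_le_pmfSize C 𝓗 hrep).trans (pmfSize_le_logb 𝓗 T hT1 ?_)
        intro H hH
        rw [h𝓗def, PMF.support_map] at hH
        obtain ⟨gg, _, rfl⟩ := hH
        calc (Finset.image gg Finset.univ).card ≤ (Finset.univ : Finset (Fin T)).card :=
              Finset.card_image_le
          _ = T := by simp
      have hlogT : Real.logb 2 (T:ℝ) ≤ 200 * ((n:ℝ)*ε) := by
        have hT0 : (0:ℝ) < T := by positivity
        have h5 : Real.log T ≤ Real.log 5 + (n:ℝ)*ε := by
          calc Real.log (T:ℝ) ≤ Real.log (5 * Real.exp ((n:ℝ)*ε)) := by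
                apply Real.log_le_log hT0 hTle
            _ = Real.log 5 + (n:ℝ)*ε := by
                rw [Real.log_mul (by norm_num) (Real.exp_ne_zero _), Real.log_exp]
        have hlog5 : Real.log 5 ≤ 4 := by
          linarith [Real.log_le_sub_one_of_pos (by norm_num : (0:ℝ) < 5)]
        have hlog2 : (0.6931471803:ℝ) < Real.log 2 := Real.log_two_gt_d9
        rw [Real.logb, div_le_iff₀ (by linarith)]
        nlinarith
      rw [ge_iff_le, div_le_iff₀ hε0]
      have hmin : min (Real.log (1/δ)) (prdim C) ≤ 200 * ((n:ℝ)*ε) :=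
        le_trans (min_le_right _ _) (hsize.trans hlogT)
      nlinarith
    · -- log(1/δ) is small
      push_neg at hsub
      rw [ge_iff_le, div_le_iff₀ hε0]
      have hmin : min (Real.log (1/δ)) (prdim C) ≤ Real.log (1/δ) := min_le_left _ _
      nlinarith

end
end

section
/- Let U be a finite set, L ≥ 1, and let μ be a probability distribution over subsets of U such that every set in the support of μ has size at most L. For f ∈ U let Q(f) = Pr_{H'∼μ}[f ∈ H']. Let τ, β ∈ (0, 0.1), let k₁ = ⌈10⁶·log(L/(βτ))/τ²⌉, draw H₁, …, H_{k₁} i.i.d. from μ, and let H be the set of all f ∈ U appearing in at least τ·k₁ of the sets H₁, …, H_{k₁}. Then with probability at least 1 − β²/30 over the draws, {f ∈ U : Q(f) ≥ 1.1τ} ⊆ H ⊆ {f ∈ U : Q(f) ≥ 0.9τ}. -/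
open scoped ENNReal Classical

noncomputable section

/-!
For each `f`, the number of draws containing `f` is a sum of `k` independent Bernoulli(`Q f`)
variables. The Chernoff bound with the optimal parameter `θ = log (τ / Q f)` bounds the
probability that `f` is misclassified (`Q f ≥ 1.1 τ` but `f ∉ H`, or `Q f < 0.9 τ` but `f ∈ H`)
by `exp (τ k (1 - r + log r)) ≤ r exp (-τ k / 1000)`, where `r = Q f / τ`. The factor `r` makes
the union bound over `U` independent of `|U|`: as `∑ f, Q f` is the expected size of a sample,
it is at most `L`, so the failure probability is at most `(L / τ) exp (-τ k / 1000)`, which the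
choice of `k₁` makes smaller than `β² / 30`.
-/

open Finset Real

section Product

variable {β : Type*}

theorem ENNReal.prod_tsum : ∀ {n : ℕ} (F : Fin n → β → ℝ≥0∞),
    ∏ i, ∑' b, F i b = ∑' s : Fin n → β, ∏ i, F i (s i)
  | 0, F => by simp
  | n + 1, F => by
    rw [← (Fin.consEquiv fun _ => β).tsum_eq, ENNReal.tsum_prod', Fin.prod_univ_succ,
      ENNReal.prod_tsum, ← ENNReal.tsum_mul_right]
    simp [Fin.prod_univ_succ, ENNReal.tsum_mul_left, Fin.consEquiv]

theorem pmfPi_apply : ∀ {n : ℕ} (p : Fin n → PMF β) (s : Fin n → β),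
    pmfPi p s = ∏ i, p i (s i)
  | 0, p, s => by simp [pmfPi, PMF.pure_apply, Subsingleton.elim s Fin.elim0]
  | n + 1, p, s => by
    obtain ⟨a, t, rfl⟩ : ∃ a t, s = Fin.cons a t :=
      ⟨s 0, Fin.tail s, (Fin.cons_self_tail s).symm⟩
    simp [pmfPi, PMF.bind_apply, PMF.pure_apply, Fin.cons_inj, and_comm (a := a = _), ite_and,
      mul_ite, tsum_ite_eq', pmfPi_apply, Fin.prod_univ_succ]

theorem tsum_pmfPi_mul_prod {n : ℕ} (p : Fin n → PMF β)
    (g : Fin n → β → ℝ≥0∞) :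
    ∑' s, pmfPi p s * ∏ i, g i (s i) = ∏ i, ∑' b, p i b * g i b := by
  simp only [pmfPi_apply, ← prod_mul_distrib, ENNReal.prod_tsum]

end Product

section Pr

variable {α : Type*} (p : PMF α)

theorem pr_add_pr_compl (S : Set α) : pr p S + pr p Sᶜ = 1 := by
  simp only [pr, PMF.toOuterMeasure_apply, ← ENNReal.tsum_add, Set.indicator_self_add_compl_apply,
    p.tsum_coe]

theorem pr_ne_top (S : Set α) : pr p S ≠ ∞ :=
  ne_top_of_le_ne_top ENNReal.one_ne_top (le_of_add_le_left (pr_add_pr_compl p S).le)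

theorem one_sub_le_pr_of_pr_compl_le {S : Set α} {ε : ℝ≥0∞} (h : pr p Sᶜ ≤ ε) :
    1 - ε ≤ pr p S := by
  rw [← pr_add_pr_compl p S]
  exact (tsub_le_tsub_left h _).trans (ENNReal.add_sub_cancel_right (pr_ne_top p _)).le

theorem pr_mono {S T : Set α} (h : S ⊆ T) : pr p S ≤ pr p T :=
  MeasureTheory.measure_mono h

theorem pr_iUnion_le {ι : Type*} [Countable ι] (S : ι → Set α) :
    pr p (⋃ i, S i) ≤ ∑' i, pr p (S i) :=
  MeasureTheory.measure_iUnion_le S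

theorem pr_le_tsum_mul {S : Set α} {X : α → ℝ≥0∞} (hX : ∀ s ∈ S, 1 ≤ X s) :
    pr p S ≤ ∑' s, p s * X s := by
  rw [pr, PMF.toOuterMeasure_apply]
  refine ENNReal.tsum_le_tsum fun s => ?_
  by_cases hs : s ∈ S
  · simpa [Set.indicator_of_mem hs] using mul_le_mul_right (hX s hs) (p s)
  · simp [Set.indicator_of_notMem hs]

end Pr

theorem one_sub_add_log_le_of_ge {r : ℝ} (hr : 1.1 ≤ r) : 1 - r + log r ≤ -1 / 1000 := by
  have hlog : log 1.1 ≤ 0.099 := by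
    rw [log_le_iff_le_exp (by norm_num)]
    linarith [quadratic_le_exp_of_nonneg (x := 0.099) (by norm_num)]
  have htangent : log (r / 1.1) ≤ r / 1.1 - 1 := log_le_sub_one_of_pos (by positivity)
  rw [log_div (by positivity) (by norm_num), div_eq_mul_inv] at htangent
  norm_num at htangent
  linarith

theorem mul_one_sub_add_log_le {r K : ℝ} (hr0 : 0 < r) (hr : r ≤ 0.9) (hK : 1000 ≤ K) :
    K * (1 - r + log r) ≤ log r - K / 1000 := by
  have hlog : log 0.9 ≤ -0.102 := by
    rw [log_le_iff_le_exp (by norm_num)]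
    have := one_sub_div_pow_le_exp_neg (n := 2) (t := 0.102) (by norm_num)
    norm_num at this ⊢
    linarith
  have htangent : log (r / 0.9) ≤ r / 0.9 - 1 := log_le_sub_one_of_pos (by positivity)
  rw [log_div hr0.ne' (by norm_num), div_eq_mul_inv] at htangent
  norm_num at htangent
  nlinarith [mul_le_mul_of_nonneg_left htangent (by linarith : (0 : ℝ) ≤ K - 1),
    mul_nonneg (by linarith : (0 : ℝ) ≤ K - 10) (by linarith : (0 : ℝ) ≤ 0.9 - r)]

section Chernoff

variable {β : Type*} (D : PMF β) (A : Set β) {k : ℕ}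

theorem pr_iidPMF_exists_eq_zero (h : pr D A = 0) :
    pr (iidPMF D k) {s | ∃ i, s i ∈ A} = 0 := by
  rw [pr, PMF.toOuterMeasure_apply_eq_zero_iff] at h ⊢
  refine Set.disjoint_left.mpr fun s hs ⟨i, hi⟩ => Set.disjoint_left.mp h ?_ hi
  rw [PMF.mem_support_iff, iidPMF, pmfPi_apply, prod_ne_zero_iff] at hs
  exact hs i (mem_univ i)

variable [DecidablePred (· ∈ A)]

theorem tsum_mul_ite_le_exp {c : ℝ} (hc : 0 ≤ c) :
    ∑' b, D b * (if b ∈ A then ENNReal.ofReal c else 1)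
      ≤ ENNReal.ofReal (exp ((c - 1) * (pr D A).toReal)) := by
  have hsplit : ∑' b, D b * (if b ∈ A then ENNReal.ofReal c else 1)
      = ENNReal.ofReal c * pr D A + pr D Aᶜ := by
    simp only [pr, PMF.toOuterMeasure_apply, ← ENNReal.tsum_mul_left, ← ENNReal.tsum_add]
    congr 1 with b
    by_cases h : b ∈ A <;> simp [h, mul_comm]
  have htotal := congrArg ENNReal.toReal (pr_add_pr_compl D A)
  rw [ENNReal.toReal_add (pr_ne_top _ _) (pr_ne_top _ _), ENNReal.toReal_one] at htotal
  rw [hsplit]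
  conv_lhs => rw [← ENNReal.ofReal_toReal (pr_ne_top D A),
    ← ENNReal.ofReal_toReal (pr_ne_top D Aᶜ), ← ENNReal.ofReal_mul hc,
    ← ENNReal.ofReal_add (by positivity) ENNReal.toReal_nonneg]
  refine ENNReal.ofReal_le_ofReal ?_
  linarith [add_one_le_exp ((c - 1) * (pr D A).toReal)]

theorem pr_iidPMF_le_exp {θ t : ℝ} {S : Set (Fin k → β)}
    (hS : ∀ s ∈ S, θ * t ≤ θ * #{i | s i ∈ A}) :
    pr (iidPMF D k) S
      ≤ ENNReal.ofReal (exp (k * (pr D A).toReal * (exp θ - 1) - θ * t)) := by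
  set g : β → ℝ≥0∞ := fun b => if b ∈ A then ENNReal.ofReal (exp θ) else 1
  have hprod (s : Fin k → β) : ∏ i, g (s i) = ENNReal.ofReal (exp (θ * #{i | s i ∈ A})) := by
    rw [prod_ite, prod_const, prod_const, one_pow, mul_one, ← ENNReal.ofReal_pow (exp_pos θ).le,
      ← exp_nat_mul, mul_comm]
  calc pr (iidPMF D k) S
      ≤ ∑' s, iidPMF D k s * (ENNReal.ofReal (exp (-θ * t)) * ∏ i, g (s i)) := by
        refine pr_le_tsum_mul _ fun s hs => ?_
        rw [hprod, ← ENNReal.ofReal_mul (exp_pos _).le, ← exp_add]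
        exact ENNReal.one_le_ofReal.mpr (one_le_exp (by linarith [hS s hs]))
    _ = ENNReal.ofReal (exp (-θ * t)) * (∑' b, D b * g b) ^ k := by
        simp only [mul_left_comm _ (ENNReal.ofReal _), ENNReal.tsum_mul_left, iidPMF,
          tsum_pmfPi_mul_prod, prod_const, card_univ, Fintype.card_fin]
    _ ≤ ENNReal.ofReal (exp (-θ * t))
          * ENNReal.ofReal (exp ((exp θ - 1) * (pr D A).toReal)) ^ k := by
        gcongr
        exact tsum_mul_ite_le_exp D A (exp_pos θ).le
    _ = ENNReal.ofReal (exp (k * (pr D A).toReal * (exp θ - 1) - θ * t)) := by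
        rw [← ENNReal.ofReal_pow (exp_pos _).le, ← ENNReal.ofReal_mul (exp_pos _).le,
          ← exp_nat_mul, ← exp_add]
        ring_nf

variable {τ : ℝ}

theorem pr_iidPMF_le_exp_ratio (hτ : 0 < τ) (hq : 0 < (pr D A).toReal) {S : Set (Fin k → β)}
    (hS : ∀ s ∈ S, log ((pr D A).toReal / τ) * #{i | s i ∈ A}
      ≤ log ((pr D A).toReal / τ) * (τ * k)) :
    pr (iidPMF D k) S ≤ ENNReal.ofReal (exp (τ * k *
      (1 - (pr D A).toReal / τ + log ((pr D A).toReal / τ)))) := by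
  refine (pr_iidPMF_le_exp D A (θ := -log ((pr D A).toReal / τ)) (t := τ * k)
    fun s hs => by linarith [hS s hs]).trans_eq ?_
  rw [exp_neg, exp_log (div_pos hq hτ)]
  field_simp
  ring_nf

theorem pr_count_ge_le (hτ : 0 < τ) (hK : 1000 ≤ τ * k)
    (hq : (pr D A).toReal ≤ 0.9 * τ) :
    pr (iidPMF D k) {s | τ * k ≤ #{i | s i ∈ A}}
      ≤ ENNReal.ofReal ((pr D A).toReal / τ * exp (-(τ * k) / 1000)) := by
  rcases ENNReal.toReal_nonneg.eq_or_lt with hq0 | hq0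
  · have hzero : pr D A = 0 :=
      (ENNReal.toReal_eq_zero_iff _).mp hq0.symm |>.resolve_right (pr_ne_top D _)
    calc pr (iidPMF D k) {s | τ * k ≤ #{i | s i ∈ A}}
        ≤ pr (iidPMF D k) {s | ∃ i, s i ∈ A} := pr_mono _ fun s hs => by
          obtain ⟨i, hi⟩ := card_pos.mp (Nat.cast_pos.mp (by linarith [hs.out] : (0 : ℝ) < _))
          exact ⟨i, (mem_filter.mp hi).2⟩
      _ = 0 := pr_iidPMF_exists_eq_zero D A hzero
      _ ≤ _ := zero_le
  · have hr : (pr D A).toReal / τ ≤ 0.9 := (div_le_iff₀ hτ).mpr hq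
    refine (pr_iidPMF_le_exp_ratio D A hτ hq0 fun s hs =>
      mul_le_mul_of_nonpos_left hs (log_nonpos (by positivity) (by linarith))).trans ?_
    refine ENNReal.ofReal_le_ofReal ?_
    calc exp (τ * k * (1 - (pr D A).toReal / τ + log ((pr D A).toReal / τ)))
        ≤ exp (log ((pr D A).toReal / τ) - τ * k / 1000) :=
          exp_le_exp.mpr (mul_one_sub_add_log_le (div_pos hq0 hτ) hr hK)
      _ = (pr D A).toReal / τ * exp (-(τ * k) / 1000) := by
          rw [sub_eq_add_neg, exp_add, exp_log (div_pos hq0 hτ), neg_div]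

theorem pr_count_lt_le (hτ : 0 < τ) (hq : 1.1 * τ ≤ (pr D A).toReal) :
    pr (iidPMF D k) {s | #{i | s i ∈ A} < τ * k} ≤ ENNReal.ofReal (exp (-(τ * k) / 1000)) := by
  have hr : 1.1 ≤ (pr D A).toReal / τ := (le_div_iff₀ hτ).mpr hq
  refine (pr_iidPMF_le_exp_ratio D A hτ (by linarith) fun s hs =>
    mul_le_mul_of_nonneg_left (le_of_lt hs) (log_nonneg (by linarith))).trans ?_
  refine ENNReal.ofReal_le_ofReal (exp_le_exp.mpr ?_)
  nlinarith [one_sub_add_log_le_of_ge hr, (by positivity : (0 : ℝ) ≤ τ * k)]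

theorem pr_misclassified_le (hτ : 0 < τ) (hK : 1000 ≤ τ * k) :
    pr (iidPMF D k) {s | 1.1 * τ ≤ (pr D A).toReal ∧ #{i | s i ∈ A} < τ * k ∨
        (pr D A).toReal < 0.9 * τ ∧ τ * k ≤ #{i | s i ∈ A}}
      ≤ ENNReal.ofReal ((pr D A).toReal / τ * exp (-(τ * k) / 1000)) := by
  by_cases h1 : 1.1 * τ ≤ (pr D A).toReal
  · refine (pr_mono _ fun s hs => ?_).trans ((pr_count_lt_le D A hτ h1).trans ?_)
    · rcases hs with hs | hs
      · exact hs.2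
      · linarith [hs.1]
    · refine ENNReal.ofReal_le_ofReal (le_mul_of_one_le_left (exp_pos _).le ?_)
      rw [le_div_iff₀ hτ]
      linarith
  by_cases h2 : (pr D A).toReal < 0.9 * τ
  · refine (pr_mono _ fun s hs => ?_).trans (pr_count_ge_le D A hτ hK h2.le)
    rcases hs with hs | hs
    · exact (h1 hs.1).elim
    · exact hs.2
  · refine (pr_mono _ (T := ∅) fun s hs => ?_).trans (by simp [pr])
    rcases hs with hs | hs
    · exact h1 hs.1
    · exact h2 hs.1

end Chernoff

section FrequentElements

variable {U : Type*} [Fintype U] [DecidableEq U] (μ : PMF (Finset U))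

theorem sum_toReal_pr_mem_le {L : ℝ} (hsupp : ∀ Hs ∈ μ.support, (#Hs : ℝ) ≤ L) :
    ∑ f, (pr μ {Hs | f ∈ Hs}).toReal ≤ L := by
  have hq (f : U) :
      (pr μ {Hs | f ∈ Hs}).toReal = ∑ Hs, if f ∈ Hs then (μ Hs).toReal else 0 := by
    rw [pr, PMF.toOuterMeasure_apply_fintype, ENNReal.toReal_sum fun Hs _ =>
      ne_top_of_le_ne_top (μ.apply_ne_top Hs) (Set.indicator_le_self _ _ Hs)]
    simp [Set.indicator_apply, apply_ite ENNReal.toReal]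
  calc ∑ f, (pr μ {Hs | f ∈ Hs}).toReal
      = ∑ Hs, (#Hs : ℝ) * (μ Hs).toReal := by
        simp only [hq]
        rw [sum_comm]
        simp [sum_ite_mem]
    _ ≤ ∑ Hs, L * (μ Hs).toReal := by
        refine sum_le_sum fun Hs _ => ?_
        by_cases h : μ Hs = 0
        · simp [h]
        · exact mul_le_mul_of_nonneg_right (hsupp Hs h) ENNReal.toReal_nonneg
    _ = L := by
        rw [← mul_sum, ← ENNReal.toReal_sum fun Hs _ => μ.apply_ne_top Hs,
          ← tsum_fintype (L := .unconditional _), μ.tsum_coe, ENNReal.toReal_one, mul_one]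

theorem pr_not_sandwiched_le {L : ℝ} (hsupp : ∀ Hs ∈ μ.support, (#Hs : ℝ) ≤ L) {τ : ℝ}
    (hτ : 0 < τ) {k : ℕ} (hK : 1000 ≤ τ * k) :
    pr (iidPMF μ k)
      {s | {f | 1.1 * τ ≤ (pr μ {Hs | f ∈ Hs}).toReal} ⊆ {f | τ * k ≤ #{i | f ∈ s i}} ∧
        {f | τ * k ≤ #{i | f ∈ s i}} ⊆ {f | 0.9 * τ ≤ (pr μ {Hs | f ∈ Hs}).toReal}}ᶜ
      ≤ ENNReal.ofReal (L / τ * exp (-(τ * k) / 1000)) := by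
  set q : U → ℝ := fun f => (pr μ {Hs | f ∈ Hs}).toReal
  set E : U → Set (Fin k → Finset U) := fun f =>
    {s | 1.1 * τ ≤ q f ∧ #{i | f ∈ s i} < τ * k ∨
      q f < 0.9 * τ ∧ τ * k ≤ #{i | f ∈ s i}}
  have hcover : {s | {f | 1.1 * τ ≤ q f} ⊆ {f | τ * k ≤ #{i | f ∈ s i}} ∧
      {f | τ * k ≤ #{i | f ∈ s i}} ⊆ {f | 0.9 * τ ≤ q f}}ᶜ ⊆ ⋃ f, E f := by
    intro s hs
    simp only [Set.mem_compl_iff, Set.mem_ofPred_eq, Set.not_subset, not_and_or, not_le] at hs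
    simp only [Set.mem_iUnion, Set.mem_ofPred_eq, E]
    rcases hs with ⟨f, hf⟩ | ⟨f, hf⟩ <;> exact ⟨f, by tauto⟩
  calc _ ≤ pr (iidPMF μ k) (⋃ f, E f) := pr_mono _ hcover
    _ ≤ ∑' f, pr (iidPMF μ k) (E f) := pr_iUnion_le _ E
    _ ≤ ∑' f, ENNReal.ofReal (q f / τ * exp (-(τ * k) / 1000)) :=
        ENNReal.tsum_le_tsum fun f => pr_misclassified_le μ {Hs | f ∈ Hs} hτ hK
    _ = ENNReal.ofReal (∑ f, q f / τ * exp (-(τ * k) / 1000)) := by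
        rw [tsum_fintype, ENNReal.ofReal_sum_of_nonneg fun f _ => by positivity]
    _ ≤ ENNReal.ofReal (L / τ * exp (-(τ * k) / 1000)) := by
        rw [← sum_mul, ← sum_div]
        gcongr
        exact sum_toReal_pr_mem_le μ hsupp

end FrequentElements

section SampleSize

variable {L τ β : ℝ}

theorem half_le_log_div_mul (hL : 1 ≤ L) (hτ0 : 0 < τ) (hτ1 : τ < 0.1) (hβ0 : 0 < β)
    (hβ1 : β < 0.1) : 1 / 2 ≤ log (L / (β * τ)) := by
  have hX : 2 ≤ L / (β * τ) := by
    rw [le_div_iff₀ (by positivity)]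
    nlinarith
  have hinv : (L / (β * τ))⁻¹ ≤ 1 / 2 := by
    rw [inv_le_comm₀ (by positivity) (by norm_num)]
    linarith
  linarith [one_sub_inv_le_log_of_pos (by positivity : 0 < L / (β * τ))]

theorem ten_pow_seven_mul_le_mul_ceil {l : ℝ} (hl : 0 ≤ l) (hτ0 : 0 < τ) (hτ1 : τ < 0.1) :
    10 ^ 7 * l ≤ τ * ⌈10 ^ 6 * l / τ ^ 2⌉₊ :=
  calc 10 ^ 7 * l ≤ 10 ^ 6 * l / τ := by
        rw [le_div_iff₀ hτ0]
        nlinarith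
    _ = τ * (10 ^ 6 * l / τ ^ 2) := by field_simp
    _ ≤ τ * ⌈10 ^ 6 * l / τ ^ 2⌉₊ := by gcongr; exact Nat.le_ceil _

theorem div_mul_exp_le (hL : 1 ≤ L) (hτ0 : 0 < τ) (hτ1 : τ < 0.1) (hβ0 : 0 < β)
    (hβ1 : β < 0.1) {K : ℝ} (hK : 10 ^ 7 * log (L / (β * τ)) ≤ K) :
    L / τ * exp (-K / 1000) ≤ β ^ 2 / 30 := by
  have hlog := half_le_log_div_mul hL hτ0 hτ1 hβ0 hβ1
  calc L / τ * exp (-K / 1000) ≤ L / τ * exp (-log ((L / (β * τ)) ^ 3)) := by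
        gcongr
        rw [log_pow]
        linarith
    _ = β ^ 3 * τ ^ 2 / L ^ 2 := by
        rw [exp_neg, exp_log (by positivity)]
        field_simp
    _ ≤ β ^ 2 / 30 := by
        rw [div_le_div_iff₀ (by positivity) (by norm_num)]
        have hβτ : 30 * β * τ ^ 2 ≤ 1 := by nlinarith
        nlinarith [mul_le_mul_of_nonneg_left hβτ (sq_nonneg β), one_le_pow₀ (n := 2) hL,
          mul_le_mul_of_nonneg_left (one_le_pow₀ (n := 2) hL) (sq_nonneg β)]

end SampleSize

/-- after `k₁ = ⌈10⁶·log(L/(βτ))/τ²⌉` i.i.d. draws from `μ`, the set `H` of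
elements appearing in at least a `τ` fraction of the draws is, with probability at least
`1 − β²/30`, sandwiched between `{f : Q(f) ≥ 1.1τ}` and `{f : Q(f) ≥ 0.9τ}`. -/
theorem stmt8 {U : Type*} [Fintype U] [DecidableEq U] (μ : PMF (Finset U)) (L : ℝ)
    (hL : 1 ≤ L) (hsupp : ∀ Hs ∈ μ.support, (Hs.card : ℝ) ≤ L) (τ β : ℝ)
    (hτ : τ ∈ Set.Ioo (0 : ℝ) 0.1) (hβ : β ∈ Set.Ioo (0 : ℝ) 0.1)
    (Q : U → ℝ) (hQ : ∀ f, Q f = (pr μ {Hs | f ∈ Hs}).toReal)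
    (k₁ : ℕ) (hk₁ : k₁ = ⌈10 ^ 6 * Real.log (L / (β * τ)) / τ ^ 2⌉₊)
    (Hof : (Fin k₁ → Finset U) → Finset U)
    (hHof : ∀ s, Hof s =
      Finset.univ.filter fun f => τ * k₁ ≤ ((Finset.univ.filter fun i => f ∈ s i).card : ℝ)) :
    pr (iidPMF μ k₁)
      {s | {f | 1.1 * τ ≤ Q f} ⊆ ↑(Hof s) ∧ ↑(Hof s) ⊆ {f | 0.9 * τ ≤ Q f}}
      ≥ ENNReal.ofReal (1 - β ^ 2 / 30) := by
  obtain ⟨hτ0, hτ1⟩ := hτ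
  obtain ⟨hβ0, hβ1⟩ := hβ
  have hlog := half_le_log_div_mul hL hτ0 hτ1 hβ0 hβ1
  have hK : 10 ^ 7 * log (L / (β * τ)) ≤ τ * k₁ := by
    rw [hk₁]
    exact ten_pow_seven_mul_le_mul_ceil (by linarith) hτ0 hτ1
  have hfail := pr_not_sandwiched_le μ hsupp hτ0 (k := k₁) (by linarith)
  simp only [hQ, hHof, coe_filter_univ]
  rw [ge_iff_le, ENNReal.ofReal_sub _ (by positivity), ENNReal.ofReal_one]
  exact one_sub_le_pr_of_pr_compl_le _
    (hfail.trans (ENNReal.ofReal_le_ofReal (div_mul_exp_le hL hτ0 hτ1 hβ0 hβ1 hK)))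

end
end

section
/- Let U be a finite set, L ≥ 1, τ, β ∈ (0, 0.1), and let Q : U → [0,1] be any function. Suppose there exists h ∈ U with Q(h) ≥ 2τ, and suppose Σ_{f ∈ U} Q(f) ≤ L (so that |{f : Q(f) ≥ 0.9τ}| ≤ L/(0.9τ)). Let γ = 10⁶·log(L/(βτ))/τ, let H_{≥0.9τ} = {f ∈ U : Q(f) ≥ 0.9τ} and H_{≥1.1τ} = {f ∈ U : Q(f) ≥ 1.1τ}, and let H be any set with H_{≥1.1τ} ⊆ H ⊆ H_{≥0.9τ}. Let 𝒫 be the distribution on U with 𝒫(f) proportional to exp(γ·Q(f)) for f ∈ H_{≥0.9τ} and 𝒫(f) = 0 otherwise, and let 𝒫_H be the distribution with 𝒫_H(f) proportional to exp(γ·Q(f)) for f ∈ H and 𝒫_H(f) = 0 otherwise. Then d_TV(𝒫, 𝒫_H) ≤ β²/30. -/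
open scoped ENNReal Classical

noncomputable section

private lemma stmt9_aux (L τ β : ℝ) (hL : 1 ≤ L) (hτ0 : 0 < τ) (hτ1 : τ < 0.1)
    (hβ0 : 0 < β) (hβ1 : β < 0.1) :
    β ^ 3 * τ ^ 2 / (0.9 * L ^ 2) ≤ β ^ 2 / 30 := by
  have hL2 : (1 : ℝ) ≤ L ^ 2 := by nlinarith
  have ha : β ^ 3 * τ ^ 2 ≤ 0.1 * β ^ 2 * τ ^ 2 := by nlinarith [sq_nonneg (β * τ)]
  have hb : 0.1 * β ^ 2 * τ ^ 2 ≤ 0.1 * β ^ 2 * 0.01 := by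
    nlinarith [mul_nonneg (sq_nonneg β)
      (mul_nonneg (by linarith : (0:ℝ) ≤ 0.1 - τ) (by linarith : (0:ℝ) ≤ 0.1 + τ))]
  have hc : β ^ 3 * τ ^ 2 / (0.9 * L ^ 2) ≤ β ^ 3 * τ ^ 2 / 0.9 :=
    div_le_div_of_nonneg_left (by positivity) (by norm_num) (by nlinarith)
  have hd : β ^ 3 * τ ^ 2 / 0.9 ≤ β ^ 2 / 30 := by
    rw [div_le_div_iff₀ (by norm_num) (by norm_num)]
    nlinarith
  linarith

/-- the exponential-weights distribution on `H_{≥0.9τ}` is close in total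
variation to its restriction to any set `H` sandwiched between `H_{≥1.1τ}` and `H_{≥0.9τ}`. -/
theorem stmt9 {U : Type*} [Fintype U] [DecidableEq U] (L τ β : ℝ) (hL : 1 ≤ L)
    (hτ : τ ∈ Set.Ioo (0 : ℝ) 0.1) (hβ : β ∈ Set.Ioo (0 : ℝ) 0.1)
    (Q : U → ℝ) (hQrange : ∀ f, Q f ∈ Set.Icc (0 : ℝ) 1)
    (hh : ∃ h, 2 * τ ≤ Q h) (hsum : ∑ f, Q f ≤ L)
    (γ : ℝ) (hγ : γ = 10 ^ 6 * Real.log (L / (β * τ)) / τ)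
    (H : Finset U)
    (hH1 : ∀ f, 1.1 * τ ≤ Q f → f ∈ H)
    (hH2 : ∀ f ∈ H, 0.9 * τ ≤ Q f)
    (H09 : Finset U) (hH09 : H09 = Finset.univ.filter fun f => 0.9 * τ ≤ Q f)
    (P PH : U → ℝ)
    (hP : ∀ f, P f =
      if f ∈ H09 then Real.exp (γ * Q f) / ∑ f' ∈ H09, Real.exp (γ * Q f') else 0)
    (hPH : ∀ f, PH f =
      if f ∈ H then Real.exp (γ * Q f) / ∑ f' ∈ H, Real.exp (γ * Q f') else 0) :
    (1 / 2) * ∑ f, |P f - PH f| ≤ β ^ 2 / 30 := by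
  obtain ⟨hτ0, hτ1⟩ := hτ
  obtain ⟨hβ0, hβ1⟩ := hβ
  obtain ⟨h0, hh0⟩ := hh
  set S := ∑ f' ∈ H09, Real.exp (γ * Q f') with hSdef
  set T := ∑ f' ∈ H, Real.exp (γ * Q f') with hTdef
  have hHsub : H ⊆ H09 := by
    intro f hf
    rw [hH09]
    simp only [Finset.mem_filter, Finset.mem_univ, true_and]
    exact hH2 f hf
  have hh0H : h0 ∈ H := hH1 h0 (by nlinarith)
  have hh0H09 : h0 ∈ H09 := hHsub hh0H
  have hT_pos : 0 < T := Finset.sum_pos (fun f _ => Real.exp_pos _) ⟨h0, hh0H⟩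
  have hS_pos : 0 < S := Finset.sum_pos (fun f _ => Real.exp_pos _) ⟨h0, hh0H09⟩
  have hTS : T ≤ S :=
    Finset.sum_le_sum_of_subset_of_nonneg hHsub (fun f _ _ => (Real.exp_pos _).le)
  set D := ∑ f ∈ H09 \ H, Real.exp (γ * Q f) with hDdef
  have hD_nonneg : 0 ≤ D := Finset.sum_nonneg fun f _ => (Real.exp_pos _).le
  have hDT : D + T = S := Finset.sum_sdiff hHsub
  -- γ nonneg facts
  have hβτL : β * τ / L ≤ 1 := by
    rw [div_le_one (by linarith)]
    nlinarith
  have hβτL_pos : 0 < β * τ / L := by positivity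
  have hlog_nonneg : 0 ≤ Real.log (L / (β * τ)) := by
    apply Real.log_nonneg
    rw [le_div_iff₀ (by positivity)]
    nlinarith
  have hγ_nonneg : 0 ≤ γ := by
    rw [hγ]
    positivity
  -- the sum equals  D/S + (1 - T/S)
  have h1 : ∑ f, |P f - PH f| = ∑ f ∈ H09, |P f - PH f| := by
    refine (Finset.sum_subset (Finset.subset_univ H09) ?_).symm
    intro f _ hf
    have hfH : f ∉ H := fun hfH => hf (hHsub hfH)
    rw [hP f, hPH f, if_neg hf, if_neg hfH]
    simp
  have h2 : ∑ f ∈ H, |P f - PH f| = 1 - T / S := by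
    have hterm : ∀ f ∈ H, |P f - PH f|
        = Real.exp (γ * Q f) / T - Real.exp (γ * Q f) / S := by
      intro f hf
      rw [hP f, hPH f, if_pos (hHsub hf), if_pos hf]
      have hle : Real.exp (γ * Q f) / S ≤ Real.exp (γ * Q f) / T := by
        gcongr

      rw [abs_sub_comm, abs_of_nonneg (by linarith)]
    rw [Finset.sum_congr rfl hterm, Finset.sum_sub_distrib, ← Finset.sum_div,
      ← Finset.sum_div, ← hTdef, div_self hT_pos.ne']
  have h3 : ∑ f ∈ H09 \ H, |P f - PH f| = D / S := by
    have hterm : ∀ f ∈ H09 \ H, |P f - PH f| = Real.exp (γ * Q f) / S := by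
      intro f hf
      obtain ⟨hf1, hf2⟩ := Finset.mem_sdiff.mp hf
      rw [hP f, hPH f, if_pos hf1, if_neg hf2, sub_zero, abs_of_nonneg (by positivity)]
    rw [Finset.sum_congr rfl hterm, ← Finset.sum_div]
  have hsum_eq : ∑ f, |P f - PH f| = D / S + (1 - T / S) := by
    rw [h1, ← Finset.sum_sdiff hHsub, h2, h3]
  have h1TS : 1 - T / S = D / S := by
    field_simp
    linarith
  -- key bound : D / S ≤ β^2/30
  have hD_le : D ≤ (H09.card : ℝ) * Real.exp (γ * (1.1 * τ)) := by
    calc D ≤ ∑ _f ∈ H09 \ H, Real.exp (γ * (1.1 * τ)) := by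
            apply Finset.sum_le_sum
            intro f hf
            obtain ⟨hf1, hf2⟩ := Finset.mem_sdiff.mp hf
            have hQf : Q f < 1.1 * τ := by
              by_contra hc
              exact hf2 (hH1 f (le_of_not_gt hc))
            exact Real.exp_le_exp.mpr (mul_le_mul_of_nonneg_left hQf.le hγ_nonneg)
      _ = ((H09 \ H).card : ℝ) * Real.exp (γ * (1.1 * τ)) := by
            rw [Finset.sum_const, nsmul_eq_mul]
      _ ≤ (H09.card : ℝ) * Real.exp (γ * (1.1 * τ)) := by
            gcongr
            exact Finset.sdiff_subset
  have hcard : (H09.card : ℝ) ≤ L / (0.9 * τ) := by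
    have hkey : 0.9 * τ * (H09.card : ℝ) ≤ L := by
      calc 0.9 * τ * (H09.card : ℝ) = ∑ _f ∈ H09, 0.9 * τ := by
            rw [Finset.sum_const, nsmul_eq_mul]; ring
        _ ≤ ∑ f ∈ H09, Q f := by
            apply Finset.sum_le_sum
            intro f hf
            rw [hH09] at hf
            exact (Finset.mem_filter.mp hf).2
        _ ≤ ∑ f, Q f :=
            Finset.sum_le_sum_of_subset_of_nonneg (Finset.subset_univ _)
              (fun f _ _ => (hQrange f).1)
        _ ≤ L := hsum
    rw [le_div_iff₀ (by linarith)]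
    linarith
  have hS_ge : Real.exp (γ * (2 * τ)) ≤ S := by
    calc Real.exp (γ * (2 * τ)) ≤ Real.exp (γ * Q h0) :=
          Real.exp_le_exp.mpr (mul_le_mul_of_nonneg_left hh0 hγ_nonneg)
      _ ≤ S := by
          rw [hSdef]
          exact Finset.single_le_sum (f := fun f => Real.exp (γ * Q f))
            (fun f _ => (Real.exp_pos _).le) hh0H09
  have hγτ : γ * τ = 10 ^ 6 * Real.log (L / (β * τ)) := by
    rw [hγ]
    field_simp
  have hlogflip : Real.log (L / (β * τ)) = - Real.log (β * τ / L) := by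
    rw [← Real.log_inv, inv_div]
  set y := β * τ / L with hydef
  have hfrac : Real.exp (γ * (1.1 * τ)) / Real.exp (γ * (2 * τ)) ≤ y ^ 3 := by
    have e1 : Real.exp (γ * (1.1 * τ)) / Real.exp (γ * (2 * τ))
        = Real.exp (Real.log y * (900000 : ℝ)) := by
      rw [← Real.exp_sub]
      congr 1
      have : γ * (1.1 * τ) - γ * (2 * τ) = -(0.9) * (γ * τ) := by ring
      rw [this, hγτ, hlogflip]
      ring
    have e2 : Real.exp (Real.log y * (900000 : ℝ)) = y ^ (900000 : ℝ) :=
      (Real.rpow_def_of_pos hβτL_pos _).symm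
    have e3 : y ^ (900000 : ℝ) ≤ y ^ (3 : ℝ) :=
      Real.rpow_le_rpow_of_exponent_ge hβτL_pos hβτL (by norm_num)
    have e4 : y ^ (3 : ℝ) = y ^ 3 := by
      rw [show (3 : ℝ) = ((3 : ℕ) : ℝ) by norm_num, Real.rpow_natCast]
    rw [e1, e2, ← e4]
    exact e3
  have hDS : D / S ≤ β ^ 2 / 30 := by
    have step1 : D / S ≤ ((H09.card : ℝ) * Real.exp (γ * (1.1 * τ))) /
        Real.exp (γ * (2 * τ)) :=
      div_le_div₀ (mul_nonneg (Nat.cast_nonneg _) (Real.exp_pos _).le) hD_le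
        (Real.exp_pos _) hS_ge
    have step2 : ((H09.card : ℝ) * Real.exp (γ * (1.1 * τ))) / Real.exp (γ * (2 * τ))
        = (H09.card : ℝ) * (Real.exp (γ * (1.1 * τ)) / Real.exp (γ * (2 * τ))) := by
      ring
    have step3 : (H09.card : ℝ) * (Real.exp (γ * (1.1 * τ)) / Real.exp (γ * (2 * τ)))
        ≤ (L / (0.9 * τ)) * y ^ 3 := by
      apply mul_le_mul hcard hfrac (by positivity)
      positivity
    have step4 : (L / (0.9 * τ)) * y ^ 3 = β ^ 3 * τ ^ 2 / (0.9 * L ^ 2) := by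
      rw [hydef]
      field_simp
    have step5 : β ^ 3 * τ ^ 2 / (0.9 * L ^ 2) ≤ β ^ 2 / 30 :=
      stmt9_aux L τ β hL hτ0 hτ1 hβ0 hβ1
    calc D / S ≤ _ := step1
      _ = _ := step2
      _ ≤ _ := step3
      _ = _ := step4
      _ ≤ _ := step5
  rw [hsum_eq, h1TS]
  linarith

end
end

section
/- Let H be a finite nonempty set, γ ≥ 0, s ≥ 0, and let u, v : H → ℝ satisfy |u(h) − v(h)| ≤ s for all h ∈ H. Define the probability distributions P_u and P_v on H by P_u(h) = exp(γ·u(h))/Σ_{h'∈H} exp(γ·u(h')) and P_v(h) = exp(γ·v(h))/Σ_{h'∈H} exp(γ·v(h')). Then d_TV(P_u, P_v) ≤ e^{2γs} − 1. -/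
/-- exponential-weights distributions built from scores that differ
pointwise by at most `s` are within total variation distance `e^{2γs} − 1`. -/
theorem stmt18 {H : Type*} [Fintype H] [Nonempty H] (γ s : ℝ) (hγ : 0 ≤ γ) (hs : 0 ≤ s)
    (u v : H → ℝ) (huv : ∀ h, |u h - v h| ≤ s) :
    (1 / 2) * ∑ h, |Real.exp (γ * u h) / (∑ h', Real.exp (γ * u h')) -
        Real.exp (γ * v h) / (∑ h', Real.exp (γ * v h'))|
      ≤ Real.exp (2 * γ * s) - 1 := by
  set Su := ∑ h', Real.exp (γ * u h') with hSu
  set Sv := ∑ h', Real.exp (γ * v h') with hSv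
  have hSupos : 0 < Su := Finset.sum_pos (fun h _ => Real.exp_pos _) Finset.univ_nonempty
  have hSvpos : 0 < Sv := Finset.sum_pos (fun h _ => Real.exp_pos _) Finset.univ_nonempty
  have hE : (0:ℝ) ≤ Real.exp (2 * γ * s) - 1 := by
    have : (1:ℝ) ≤ Real.exp (2 * γ * s) := Real.one_le_exp (by positivity)
    linarith
  -- termwise comparisons of exponentials
  have key1 : ∀ h : H, Real.exp (γ * v h) ≤ Real.exp (γ * s) * Real.exp (γ * u h) := by
    intro h
    rw [← Real.exp_add]
    apply Real.exp_le_exp.2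
    have := (abs_le.1 (huv h)).1
    nlinarith [mul_le_mul_of_nonneg_left (by linarith : v h - u h ≤ s) hγ]
  have key2 : ∀ h : H, Real.exp (γ * u h) ≤ Real.exp (γ * s) * Real.exp (γ * v h) := by
    intro h
    rw [← Real.exp_add]
    apply Real.exp_le_exp.2
    have := (abs_le.1 (huv h)).2
    nlinarith [mul_le_mul_of_nonneg_left (by linarith : u h - v h ≤ s) hγ]
  have hSuv : Su ≤ Real.exp (γ * s) * Sv := by
    rw [hSu, hSv, Finset.mul_sum]
    exact Finset.sum_le_sum fun h _ => key2 h
  have hSvu : Sv ≤ Real.exp (γ * s) * Su := by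
    rw [hSu, hSv, Finset.mul_sum]
    exact Finset.sum_le_sum fun h _ => key1 h
  have hexp2 : Real.exp (γ * s) * Real.exp (γ * s) = Real.exp (2 * γ * s) := by
    rw [← Real.exp_add]; ring_nf
  -- pointwise bound
  have pt : ∀ h : H, |Real.exp (γ * u h) / Su - Real.exp (γ * v h) / Sv|
      ≤ (Real.exp (2 * γ * s) - 1) * (Real.exp (γ * u h) / Su) := by
    intro h
    set a := Real.exp (γ * u h) with ha
    set b := Real.exp (γ * v h) with hb
    have hap : 0 < a := Real.exp_pos _
    have hbp : 0 < b := Real.exp_pos _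
    have hup : b / Sv ≤ Real.exp (2 * γ * s) * (a / Su) := by
      rw [div_le_iff₀ hSvpos]
      have h1 : b ≤ Real.exp (γ * s) * a := key1 h
      have h2 : Real.exp (2 * γ * s) * (a / Su) * Sv
          = Real.exp (γ * s) * a * (Real.exp (γ * s) * Sv) / Su := by
        field_simp; rw [← hexp2]; ring
      rw [h2]
      rw [le_div_iff₀ hSupos]
      have h3 : Su ≤ Real.exp (γ * s) * Sv := hSuv
      nlinarith [Real.exp_pos (γ * s)]
    have hlo : a / Su ≤ Real.exp (2 * γ * s) * (b / Sv) := by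
      rw [div_le_iff₀ hSupos]
      have h1 : a ≤ Real.exp (γ * s) * b := key2 h
      have h2 : Real.exp (2 * γ * s) * (b / Sv) * Su
          = Real.exp (γ * s) * b * (Real.exp (γ * s) * Su) / Sv := by
        field_simp; rw [← hexp2]; ring
      rw [h2, le_div_iff₀ hSvpos]
      nlinarith [Real.exp_pos (γ * s)]
    rw [abs_le]
    constructor
    · -- -(E-1)(a/Su) ≤ a/Su - b/Sv, i.e. b/Sv ≤ E (a/Su)
      nlinarith [div_pos hap hSupos]
    · -- a/Su - b/Sv ≤ (E-1)(a/Su): from a/Su ≤ E (b/Sv)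
      have hEpos : 0 < Real.exp (2 * γ * s) := Real.exp_pos _
      have h4 : a / Su - (a/Su) * (Real.exp (2*γ*s))⁻¹
          ≤ (Real.exp (2*γ*s) - 1) * (a/Su) := by
        have hinv : (Real.exp (2*γ*s))⁻¹ = Real.exp (-(2*γ*s)) := by
          rw [← Real.exp_neg]
        rw [hinv]
        have e1 : (2*γ*s) + 1 ≤ Real.exp (2*γ*s) := Real.add_one_le_exp _
        have e2 : (-(2*γ*s)) + 1 ≤ Real.exp (-(2*γ*s)) := Real.add_one_le_exp _
        have h2E : 2 - Real.exp (2*γ*s) ≤ Real.exp (-(2*γ*s)) := by linarith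
        have hcan : 0 ≤ a / Su := le_of_lt (div_pos hap hSupos)
        nlinarith
      have h5 : b / Sv ≥ (a/Su) * (Real.exp (2*γ*s))⁻¹ := by
        rw [ge_iff_le, ← div_eq_mul_inv, div_le_iff₀ hEpos]
        linarith [hlo]
      calc a / Su - b / Sv ≤ a/Su - (a/Su) * (Real.exp (2*γ*s))⁻¹ := by linarith
        _ ≤ (Real.exp (2*γ*s) - 1) * (a/Su) := h4
  have hsum : ∑ h, |Real.exp (γ * u h) / Su - Real.exp (γ * v h) / Sv|
      ≤ (Real.exp (2 * γ * s) - 1) := by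
    calc ∑ h, |Real.exp (γ * u h) / Su - Real.exp (γ * v h) / Sv|
        ≤ ∑ h, (Real.exp (2 * γ * s) - 1) * (Real.exp (γ * u h) / Su) :=
          Finset.sum_le_sum fun h _ => pt h
      _ = (Real.exp (2 * γ * s) - 1) * (Su / Su) := by
          rw [← Finset.mul_sum, ← Finset.sum_div]
      _ = Real.exp (2 * γ * s) - 1 := by rw [div_self hSupos.ne', mul_one]
  have hnn : 0 ≤ ∑ h, |Real.exp (γ * u h) / Su - Real.exp (γ * v h) / Sv| :=
    Finset.sum_nonneg fun h _ => abs_nonneg _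
  linarith
end
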